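/- arXiv:math/0610206 — 7 statements merged into one kernel-verified Lean document; each statement's English description precedes it below -/
import Mathlib

section
/- There is no polynomial p ∈ ℝ[ξ,η,ζ] such that (i) p(ξ,0,ζ) = −ξζ(ξ+ζ−1) for all ξ ≥ 0, ζ ≥ 0 with ξ+ζ ≤ 1, and (ii) p vanishes on the other four faces of Ω, i.e. p(0,η,ζ) = 0 whenever 0 ≤ ζ ≤ 1 and 0 ≤ η ≤ 1−ζ; p(ξ,η,0) = 0 whenever 0 ≤ ξ ≤ 1 and 0 ≤ η ≤ 1; p(1−ζ,η,ζ) = 0 whenever 0 ≤ ζ ≤ 1 and 0 ≤ η ≤ 1−ζ; and p(ξ,1−ζ,ζ) = 0 whenever 0 ≤ ζ ≤ 1 and 0 ≤ ξ ≤ 1−ζ. Consequently the function u(ξ,η,ζ) = ξζ(ξ+ζ−1)(η+ζ−1)/(1−ζ) on Ω cannot be represented by any polynomial having the same boundary values. -/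
open MvPolynomial Polynomial

private lemma eval_aeval_line (p : MvPolynomial (Fin 3) ℝ)
    (f : Fin 3 → Polynomial ℝ) (t : ℝ) :
    Polynomial.eval t (MvPolynomial.aeval f p) =
      MvPolynomial.eval (fun i => Polynomial.eval t (f i)) p := by
  rw [MvPolynomial.aeval_def]
  show (Polynomial.evalRingHom t) (MvPolynomial.eval₂ (algebraMap ℝ (Polynomial ℝ)) f p) = _
  rw [MvPolynomial.eval₂_comp_left (Polynomial.evalRingHom t)]
  have h : (Polynomial.evalRingHom t).comp (algebraMap ℝ (Polynomial ℝ)) = RingHom.id ℝ := by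
    ext x; simp
  rw [h]
  rfl

/-- There is no polynomial `p ∈ ℝ[ξ,η,ζ]` which equals `−ξζ(ξ+ζ−1)` on the
face `η = 0` of the reference pyramid and vanishes on the other four faces.  Consequently
the function `u = ξζ(ξ+ζ−1)(η+ζ−1)/(1−ζ)` cannot be represented by a polynomial with the
same boundary values. -/
theorem no_polynomial_with_pyramid_face_data :
    ¬ ∃ p : MvPolynomial (Fin 3) ℝ,
      (∀ ξ ζ : ℝ, 0 ≤ ξ → 0 ≤ ζ → ξ + ζ ≤ 1 →
        MvPolynomial.eval ![ξ, 0, ζ] p = -(ξ * ζ * (ξ + ζ - 1))) ∧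
      (∀ η ζ : ℝ, 0 ≤ ζ → ζ ≤ 1 → 0 ≤ η → η ≤ 1 - ζ →
        MvPolynomial.eval ![0, η, ζ] p = 0) ∧
      (∀ ξ η : ℝ, 0 ≤ ξ → ξ ≤ 1 → 0 ≤ η → η ≤ 1 →
        MvPolynomial.eval ![ξ, η, 0] p = 0) ∧
      (∀ η ζ : ℝ, 0 ≤ ζ → ζ ≤ 1 → 0 ≤ η → η ≤ 1 - ζ →
        MvPolynomial.eval ![1 - ζ, η, ζ] p = 0) ∧
      (∀ ξ ζ : ℝ, 0 ≤ ζ → ζ ≤ 1 → 0 ≤ ξ → ξ ≤ 1 - ζ →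
        MvPolynomial.eval ![ξ, 1 - ζ, ζ] p = 0) := by
  rintro ⟨p, h1, -, -, -, h5⟩
  set ξ₀ : ℝ := (1:ℝ)/2 with hx
  -- polynomial in ζ along the line ξ = ξ₀, η = 0
  set q1 : Polynomial ℝ :=
    MvPolynomial.aeval ![Polynomial.C ξ₀, Polynomial.C 0, Polynomial.X] p
      + Polynomial.C ξ₀ * Polynomial.X * (Polynomial.C ξ₀ + Polynomial.X - 1) with hq1
  have harr1 : ∀ t : ℝ,
      (fun i => Polynomial.eval t (![Polynomial.C ξ₀, Polynomial.C 0, Polynomial.X] i))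
        = ![ξ₀, 0, t] := by
    intro t; funext i; fin_cases i <;> simp
  have hq1eval : ∀ t : ℝ, q1.eval t =
      MvPolynomial.eval ![ξ₀, 0, t] p + ξ₀ * t * (ξ₀ + t - 1) := by
    intro t
    rw [hq1]
    simp only [Polynomial.eval_add, Polynomial.eval_mul, Polynomial.eval_sub,
      Polynomial.eval_C, Polynomial.eval_X, Polynomial.eval_one]
    rw [eval_aeval_line, harr1]
  have hq1zero : q1 = 0 := by
    apply Polynomial.eq_zero_of_infinite_isRoot
    apply Set.Infinite.mono (s := Set.Icc (0:ℝ) (1/2))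
    · intro t ht
      have h1t : ξ₀ + t ≤ 1 := by rw [hx]; linarith [ht.2]
      have := h1 ξ₀ t (by norm_num [hx]) ht.1 h1t
      simp only [Polynomial.IsRoot, Set.mem_setOf_eq]
      rw [hq1eval, this]; ring
    · exact Set.Icc_infinite (by norm_num)
  -- polynomial in ζ along the line ξ = ξ₀, η = 1 − ζ
  set q2 : Polynomial ℝ :=
    MvPolynomial.aeval ![Polynomial.C ξ₀, 1 - Polynomial.X, Polynomial.X] p with hq2
  have harr2 : ∀ t : ℝ,
      (fun i => Polynomial.eval t (![Polynomial.C ξ₀, 1 - Polynomial.X, Polynomial.X] i))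
        = ![ξ₀, 1 - t, t] := by
    intro t; funext i; fin_cases i <;> simp
  have hq2eval : ∀ t : ℝ, q2.eval t = MvPolynomial.eval ![ξ₀, 1 - t, t] p := by
    intro t
    rw [hq2, eval_aeval_line, harr2]
  have hq2zero : q2 = 0 := by
    apply Polynomial.eq_zero_of_infinite_isRoot
    apply Set.Infinite.mono (s := Set.Icc (0:ℝ) (1/2))
    · intro t ht
      have := h5 ξ₀ t ht.1 (by linarith [ht.2]) (by norm_num [hx]) (by rw [hx]; linarith [ht.2])
      simp only [Polynomial.IsRoot, Set.mem_setOf_eq]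
      rw [hq2eval, this]
    · exact Set.Icc_infinite (by norm_num)
  -- evaluate both at ζ = 1: they give p(ξ₀,0,1) = −ξ₀² and p(ξ₀,0,1) = 0
  have e1 := hq1eval 1
  rw [hq1zero] at e1
  have e2 := hq2eval 1
  rw [hq2zero] at e2
  simp only [Polynomial.eval_zero, sub_self] at e1 e2
  rw [← e2] at e1
  norm_num [hx] at e1
end

section
/- The function u(ξ,η,ζ) = ξζ(ξ+ζ−1)(η+ζ−1)/(1−ζ) belongs to H¹(Ω) in the following sense: u is differentiable at every point of the interior Ω° of Ω (where ζ < 1), the function u² is Lebesgue-integrable over Ω°, and the squared Euclidean norm of the gradient of u is Lebesgue-integrable over Ω°. -/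
open MeasureTheory

noncomputable section

/-- The reference pyramid `Ω = {ξ,η,ζ ≥ 0, ξ ≤ 1−ζ, η ≤ 1−ζ}` inside `ℝ³`
(as Euclidean space, so that norms are Euclidean). -/
def Pyr : Set (EuclideanSpace ℝ (Fin 3)) :=
  {p | 0 ≤ p 0 ∧ 0 ≤ p 1 ∧ 0 ≤ p 2 ∧ p 0 ≤ 1 - p 2 ∧ p 1 ≤ 1 - p 2}

/-- `u(ξ,η,ζ) = ξζ(ξ+ζ−1)(η+ζ−1)/(1−ζ)`. -/
def uFun : EuclideanSpace ℝ (Fin 3) → ℝ :=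
  fun p => p 0 * p 2 * (p 0 + p 2 - 1) * (p 1 + p 2 - 1) / (1 - p 2)

/-!
On the pyramid, `0 ≤ ξ ≤ 1 - ζ` and `0 ≤ η ≤ 1 - ζ`, so the ratios `(ξ + ζ - 1) / (1 - ζ)` and
`(η + ζ - 1) / (1 - ζ)` lie in `[-1, 1]`. Writing `u = ξ ζ (ξ + ζ - 1) · (η + ζ - 1) / (1 - ζ)`, the
function `u` and its three partial derivatives are sums of products of such ratios and of
coordinates in `[-1, 1]`: the singular denominator `1 - ζ` is always absorbed by a ratio. Hence `u`
and `∇u` are bounded on `Ω°`, and `Ω` has finite volume.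
-/

theorem MeasureTheory.integrableOn_sq_of_abs_le {α : Type*} [MeasurableSpace α] {μ : Measure α}
    {s : Set α} {f : α → ℝ} {M : ℝ} (hs : MeasurableSet s) (hμs : μ s ≠ ⊤)
    (hf : AEStronglyMeasurable f μ) (hM : ∀ x ∈ s, |f x| ≤ M) :
    IntegrableOn (fun x => f x ^ 2) s μ := by
  refine Measure.integrableOn_of_bounded (M := M ^ 2) hμs (hf.pow 2) ?_
  filter_upwards [ae_restrict_mem hs] with x hx
  rw [norm_pow, Real.norm_eq_abs]
  exact pow_le_pow_left₀ (abs_nonneg _) (hM x hx) 2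

theorem EuclideanSpace.interior_setOf_apply_le {ι : Type*} [Fintype ι] (i : ι) (c : ℝ) :
    interior {x : EuclideanSpace ℝ ι | x i ≤ c} = {x | x i < c} := by
  have hsurj : Function.Surjective (EuclideanSpace.proj i : EuclideanSpace ℝ ι →L[ℝ] ℝ) :=
    fun t => ⟨WithLp.toLp 2 fun _ => t, rfl⟩
  simpa [Set.preimage] using
    (EuclideanSpace.proj i).interior_preimage (σ' := RingHom.id ℝ) hsurj (Set.Iic c)

theorem EuclideanSpace.norm_sum_smul_proj_le {ι : Type*} [Fintype ι] (c : ι → ℝ) :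
    ‖∑ i, c i • EuclideanSpace.proj (𝕜 := ℝ) (ι := ι) i‖ ≤ ∑ i, |c i| := by
  refine (norm_sum_le _ _).trans (Finset.sum_le_sum fun i _ => ?_)
  rw [norm_smul, Real.norm_eq_abs]
  refine mul_le_of_le_one_right (abs_nonneg _) ?_
  exact ContinuousLinearMap.opNorm_le_bound _ zero_le_one fun x => by
    simpa using PiLp.norm_apply_le x i

theorem interior_pyr_subset : interior Pyr ⊆ Pyr ∩ {p | p 2 < 1} := by
  refine Set.subset_inter interior_subset ?_
  rw [← EuclideanSpace.interior_setOf_apply_le]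
  exact interior_mono fun p ⟨h0, _, _, h02, _⟩ => show p 2 ≤ 1 by linarith

theorem volume_pyr_lt_top : volume Pyr < ⊤ := by
  have hsub : Pyr ⊆ WithLp.ofLp ⁻¹' Set.Icc (0 : Fin 3 → ℝ) 1 := by
    rintro p ⟨h0, h1, h2, h02, h12⟩
    refine ⟨fun i => ?_, fun i => ?_⟩ <;> fin_cases i <;> simp <;> linarith
  calc volume Pyr ≤ volume (WithLp.ofLp ⁻¹' Set.Icc (0 : Fin 3 → ℝ) 1) := measure_mono hsub
    _ = volume (Set.Icc (0 : Fin 3 → ℝ) 1) :=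
      (PiLp.volume_preserving_ofLp (Fin 3)).measure_preimage measurableSet_Icc.nullMeasurableSet
    _ < ⊤ := measure_Icc_lt_top

theorem abs_mul_le_one_of_le {a b : ℝ} (ha : |a| ≤ 1) (hb : |b| ≤ 1) : |a * b| ≤ 1 := by
  rw [abs_mul]
  exact mul_le_one₀ ha (abs_nonneg b) hb

theorem abs_sub_div_le_one {t d : ℝ} (ht : 0 ≤ t) (htd : t ≤ d) : |(t - d) / d| ≤ 1 := by
  rw [abs_div, abs_of_nonneg (ht.trans htd)]
  exact div_le_one_of_le₀ (abs_le.2 ⟨by linarith, by linarith⟩) (ht.trans htd)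

namespace Pyr

-- At the apex `1 - p 2 = 0`, so `ratio i p = 0` there and the bounds below hold on all of `Pyr`.
def ratio (i : Fin 3) (p : EuclideanSpace ℝ (Fin 3)) : ℝ := (p i - (1 - p 2)) / (1 - p 2)

def uGrad (p : EuclideanSpace ℝ (Fin 3)) : Fin 3 → ℝ :=
  ![p 2 * (2 * p 0 + p 2 - 1) * ratio 1 p,
    p 0 * p 2 * ratio 0 p,
    p 0 * ((p 0 + p 2 - 1) * ratio 1 p + p 2 * ratio 1 p + p 2 * ratio 0 p
      + p 2 * ratio 0 p * ratio 1 p)]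

theorem uFun_eq (p : EuclideanSpace ℝ (Fin 3)) :
    uFun p = p 0 * p 2 * (p 0 + p 2 - 1) * ratio 1 p := by
  rw [uFun, ratio, mul_div_assoc]
  ring_nf

theorem hasFDerivAt_uFun {p : EuclideanSpace ℝ (Fin 3)} (hp : p 2 ≠ 1) :
    HasFDerivAt uFun (∑ i, uGrad p i • EuclideanSpace.proj (𝕜 := ℝ) i) p := by
  have hd : 1 - p 2 ≠ 0 := sub_ne_zero.2 hp.symm
  have hx (i : Fin 3) : HasFDerivAt (fun q : EuclideanSpace ℝ (Fin 3) => q i)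
      (EuclideanSpace.proj (𝕜 := ℝ) i) p :=
    (EuclideanSpace.proj (𝕜 := ℝ) i).hasFDerivAt
  have hinv : HasFDerivAt (fun q : EuclideanSpace ℝ (Fin 3) => (1 - q 2)⁻¹)
      (-((1 - p 2) ^ 2)⁻¹ • -EuclideanSpace.proj (𝕜 := ℝ) 2) p :=
    (hasDerivAt_inv hd).comp_hasFDerivAt p ((hx 2).const_sub 1)
  have hnum := (((hx 0).mul (hx 2)).mul (((hx 0).add (hx 2)).sub_const 1)).mul
    (((hx 1).add (hx 2)).sub_const 1)
  refine ((hnum.mul hinv).congr_fderiv ?_).congr_of_eventuallyEq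
    (Filter.Eventually.of_forall fun q => div_eq_mul_inv _ _)
  ext v
  simp only [Pi.add_apply, Pi.mul_apply, smul_neg, neg_smul, neg_neg, smul_add,
    add_apply, smul_apply, PiLp.proj_apply, smul_eq_mul,
    uGrad, ratio, Fin.sum_univ_three, Matrix.cons_val_zero, Matrix.cons_val_one, Matrix.cons_val]
  field_simp
  ring

theorem abs_ratio_le_one {p : EuclideanSpace ℝ (Fin 3)} (hp : p ∈ Pyr) {i : Fin 3}
    (hi : i ≠ 2) : |ratio i p| ≤ 1 := by
  obtain ⟨h0, h1, -, h02, h12⟩ := hp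
  apply abs_sub_div_le_one <;> fin_cases i <;> simp_all

theorem abs_factors_le_one {p : EuclideanSpace ℝ (Fin 3)} (hp : p ∈ Pyr) :
    |p 0| ≤ 1 ∧ |p 2| ≤ 1 ∧ |p 0 + p 2 - 1| ≤ 1 ∧ |2 * p 0 + p 2 - 1| ≤ 1 := by
  obtain ⟨h0, -, h2, h02, -⟩ := hp
  refine ⟨?_, ?_, ?_, ?_⟩ <;> exact abs_le.2 ⟨by linarith, by linarith⟩

theorem abs_uFun_le_one {p : EuclideanSpace ℝ (Fin 3)} (hp : p ∈ Pyr) : |uFun p| ≤ 1 := by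
  obtain ⟨hξ, hζ, ha, -⟩ := abs_factors_le_one hp
  rw [uFun_eq]
  exact abs_mul_le_one_of_le (abs_mul_le_one_of_le (abs_mul_le_one_of_le hξ hζ) ha)
    (abs_ratio_le_one hp (by decide))

theorem sum_abs_uGrad_le {p : EuclideanSpace ℝ (Fin 3)} (hp : p ∈ Pyr) :
    ∑ i, |uGrad p i| ≤ 6 := by
  obtain ⟨hξ, hζ, ha, ha'⟩ := abs_factors_le_one hp
  have hr0 : |ratio 0 p| ≤ 1 := abs_ratio_le_one hp (by decide)
  have hr1 : |ratio 1 p| ≤ 1 := abs_ratio_le_one hp (by decide)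
  have hsum : |(p 0 + p 2 - 1) * ratio 1 p + p 2 * ratio 1 p + p 2 * ratio 0 p
      + p 2 * ratio 0 p * ratio 1 p| ≤ 4 := by
    have := abs_mul_le_one_of_le ha hr1
    have := abs_mul_le_one_of_le hζ hr1
    have := abs_mul_le_one_of_le hζ hr0
    have := abs_mul_le_one_of_le (abs_mul_le_one_of_le hζ hr0) hr1
    have := abs_add_three ((p 0 + p 2 - 1) * ratio 1 p) (p 2 * ratio 1 p) (p 2 * ratio 0 p)
    have := abs_add_le ((p 0 + p 2 - 1) * ratio 1 p + p 2 * ratio 1 p + p 2 * ratio 0 p)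
      (p 2 * ratio 0 p * ratio 1 p)
    linarith
  have h0 : |uGrad p 0| ≤ 1 := abs_mul_le_one_of_le (abs_mul_le_one_of_le hζ ha') hr1
  have h1 : |uGrad p 1| ≤ 1 := abs_mul_le_one_of_le (abs_mul_le_one_of_le hξ hζ) hr0
  have h2 : |uGrad p 2| ≤ 4 := by
    rw [show uGrad p 2 = p 0 * _ from rfl, abs_mul, ← one_mul 4]
    exact mul_le_mul hξ hsum (abs_nonneg _) zero_le_one
  rw [Fin.sum_univ_three]
  linarith

end Pyr

/-- `u ∈ H¹(Ω)`: `u` is differentiable on the interior `Ω°`, `u²` is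
Lebesgue-integrable on `Ω°`, and the squared Euclidean norm of the gradient of `u`
is Lebesgue-integrable on `Ω°`. -/
theorem uFun_mem_H1 :
    (∀ x ∈ interior Pyr, DifferentiableAt ℝ uFun x) ∧
    IntegrableOn (fun x => (uFun x) ^ 2) (interior Pyr) volume ∧
    IntegrableOn (fun x => ‖fderiv ℝ uFun x‖ ^ 2) (interior Pyr) volume := by
  have hint (x) (hx : x ∈ interior Pyr) : x ∈ Pyr ∧ x 2 ≠ 1 :=
    ⟨(interior_pyr_subset hx).1, (interior_pyr_subset hx).2.ne⟩
  have hvol : volume (interior Pyr) ≠ ⊤ :=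
    ((measure_mono interior_subset).trans_lt volume_pyr_lt_top).ne
  have hmeas : MeasurableSet (interior Pyr) := isOpen_interior.measurableSet
  refine ⟨fun x hx => (Pyr.hasFDerivAt_uFun (hint x hx).2).differentiableAt, ?_, ?_⟩
  · have hu : Measurable uFun := by unfold uFun; fun_prop
    exact integrableOn_sq_of_abs_le hmeas hvol hu.aestronglyMeasurable
      fun x hx => Pyr.abs_uFun_le_one (hint x hx).1
  · refine integrableOn_sq_of_abs_le (M := 6) hmeas hvol
      (measurable_fderiv ℝ uFun).norm.aestronglyMeasurable fun x hx => ?_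
    rw [abs_norm, (Pyr.hasFDerivAt_uFun (hint x hx).2).fderiv]
    exact (EuclideanSpace.norm_sum_smul_proj_le _).trans (Pyr.sum_abs_uGrad_le (hint x hx).1)

end
end

section
/- Let p ∈ ℝ[X,Y,Z] be a polynomial that vanishes at every point of the four faces of Ω contained in the planes {ξ = 0}, {ζ = 0}, {ξ+ζ = 1}, {η+ζ = 1}; that is, p(0,η,ζ) = 0 whenever 0 ≤ ζ ≤ 1 and 0 ≤ η ≤ 1−ζ; p(ξ,η,0) = 0 whenever 0 ≤ ξ ≤ 1 and 0 ≤ η ≤ 1; p(1−ζ,η,ζ) = 0 whenever 0 ≤ ζ ≤ 1 and 0 ≤ η ≤ 1−ζ; and p(ξ,1−ζ,ζ) = 0 whenever 0 ≤ ζ ≤ 1 and 0 ≤ ξ ≤ 1−ζ. Then the polynomial X·Z·(X+Z−1)·(Y+Z−1) divides p in ℝ[X,Y,Z]. -/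
/-!
Substituting `q` for the variable `X i` is an algebra endomorphism of the polynomial ring that
agrees with the identity modulo `X i - q`, so `X i - q` divides `p - p[X i := q]`. If `p` vanishes
on the graph `x_i = q(x)` over a box with infinite sides, then `p[X i := q]` vanishes on the box,
hence is zero, and `X i - q ∣ p`. Each face of the pyramid contains such a graph piece over a
small box, and the four face equations `X i - q` (with `X i` absent from `q`) are pairwise
non-associated primes, so their product divides `p`.
-/

open MvPolynomial

namespace MvPolynomial

section Substitution

variable {R σ : Type*} [CommRing R] (i : σ) (q : MvPolynomial σ R)

theorem X_sub_dvd_sub_bind₁_update [DecidableEq σ] (p : MvPolynomial σ R) :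
    X i - q ∣ p - bind₁ (Function.update X i q) p := by
  rw [← Ideal.mem_span_singleton, ← Ideal.Quotient.eq]
  show Ideal.Quotient.mkₐ R _ p = Ideal.Quotient.mkₐ R _ (bind₁ (Function.update X i q) p)
  rw [← AlgHom.comp_apply]
  congr 1
  refine algHom_ext fun j => ?_
  rcases eq_or_ne j i with rfl | hj
  · simp only [AlgHom.comp_apply, bind₁_X_right, Function.update_self, Ideal.Quotient.mkₐ_eq_mk]
    exact Ideal.Quotient.eq.mpr (Ideal.mem_span_singleton_self _)
  · simp [hj]

theorem bind₁_update_eq_self_of_notMem_vars [DecidableEq σ] {p : MvPolynomial σ R}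
    (hp : i ∉ p.vars) : bind₁ (Function.update X i q) p = p := by
  refine hom_congr_vars (f₁ := (bind₁ (Function.update X i q)).toRingHom) (f₂ := RingHom.id _)
    (by ext; simp) (fun j hj _ => ?_) rfl
  simp [show j ≠ i by rintro rfl; exact hp hj]

theorem X_sub_dvd_iff_bind₁_update_eq_zero [DecidableEq σ] (hq : i ∉ q.vars)
    (p : MvPolynomial σ R) : X i - q ∣ p ↔ bind₁ (Function.update X i q) p = 0 := by
  constructor
  · rintro ⟨r, rfl⟩
    simp [bind₁_update_eq_self_of_notMem_vars i q hq]
  · intro h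
    simpa [h] using X_sub_dvd_sub_bind₁_update i q p

theorem prime_X_sub_of_notMem_vars [IsDomain R] (hq : i ∉ q.vars) : Prime (X i - q) := by
  classical
  have hdvd := X_sub_dvd_iff_bind₁_update_eq_zero i q hq
  refine ⟨fun h => ?_, fun h => ?_, fun a b hab => ?_⟩
  · rw [sub_eq_zero] at h
    simp [← h, vars_X] at hq
  · have := h.map (bind₁ (Function.update X i q))
    simp [(hdvd _).mp dvd_rfl] at this
  · simpa [hdvd] using hab

theorem X_sub_dvd_of_eval_update_eq_zero [IsDomain R] [DecidableEq σ] (S : σ → Set R)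
    (hS : ∀ j, (S j).Infinite) {p : MvPolynomial σ R}
    (hp : ∀ x ∈ Set.univ.pi S, eval (Function.update x i (eval x q)) p = 0) : X i - q ∣ p := by
  have hsubst : bind₁ (Function.update X i q) p = 0 := funext_set S hS fun x hx => by
    have hpoint : (fun j => eval x (Function.update X i q j)) = Function.update x i (eval x q) := by
      funext j
      rcases eq_or_ne j i with rfl | hj <;> simp [*]
    rw [map_zero, ← hp x hx, ← hpoint]
    exact eval₂Hom_bind₁ _ _ _ _
  simpa [hsubst] using X_sub_dvd_sub_bind₁_update i q p

end Substitution

end MvPolynomial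

theorem mul_dvd_of_dvd_of_prime {α : Type*} [CommMonoidWithZero α] {a b c : α}
    (ha : a ∣ c) (hb : b ∣ c) (hb_prime : Prime b) (hba : ¬b ∣ a) : a * b ∣ c := by
  obtain ⟨d, rfl⟩ := ha
  exact mul_dvd_mul_left a ((hb_prime.dvd_or_dvd hb).resolve_left hba)

theorem not_dvd_of_map_eq_zero {α β F : Type*} [CommMonoidWithZero α] [CommMonoidWithZero β]
    [FunLike F α β] [MonoidWithZeroHomClass F α β] (f : F) {a b : α} (ha : f a = 0) (hb : f b ≠ 0) :
    ¬a ∣ b := fun h => hb (zero_dvd_iff.mp (ha ▸ map_dvd f h))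

/-- a real polynomial in three variables which vanishes on the four faces of
the reference pyramid contained in the planes `ξ = 0`, `ζ = 0`, `ξ + ζ = 1`, `η + ζ = 1`
is divisible by `X·Z·(X+Z−1)·(Y+Z−1)` in `ℝ[X,Y,Z]`. -/
theorem pyramid_face_vanishing_divisibility (p : MvPolynomial (Fin 3) ℝ)
    (h1 : ∀ η ζ : ℝ, 0 ≤ ζ → ζ ≤ 1 → 0 ≤ η → η ≤ 1 - ζ →
      MvPolynomial.eval ![0, η, ζ] p = 0)
    (h2 : ∀ ξ η : ℝ, 0 ≤ ξ → ξ ≤ 1 → 0 ≤ η → η ≤ 1 →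
      MvPolynomial.eval ![ξ, η, 0] p = 0)
    (h3 : ∀ η ζ : ℝ, 0 ≤ ζ → ζ ≤ 1 → 0 ≤ η → η ≤ 1 - ζ →
      MvPolynomial.eval ![1 - ζ, η, ζ] p = 0)
    (h4 : ∀ ξ ζ : ℝ, 0 ≤ ζ → ζ ≤ 1 → 0 ≤ ξ → ξ ≤ 1 - ζ →
      MvPolynomial.eval ![ξ, 1 - ζ, ζ] p = 0) :
    (X 0 * X 2 * (X 0 + X 2 - 1) * (X 1 + X 2 - 1) : MvPolynomial (Fin 3) ℝ) ∣ p := by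
  -- Over the box `[0, 1/2]³`, each face's graph stays within the region where it is given.
  have face (i : Fin 3) (q : MvPolynomial (Fin 3) ℝ)
      (hq : ∀ x : Fin 3 → ℝ, (∀ j, x j ∈ Set.Icc 0 (1 / 2)) →
        eval (Function.update x i (eval x q)) p = 0) : X i - q ∣ p :=
    X_sub_dvd_of_eval_update_eq_zero i q _ (fun _ => Set.Icc_infinite (by norm_num))
      fun x hx => hq x (Set.mem_univ_pi.mp hx)
  obtain ⟨hξ, hζ, hξζ, hηζ⟩ : X 0 - 0 ∣ p ∧ X 2 - 0 ∣ p ∧ X 0 - (1 - X 2) ∣ p ∧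
      X 1 - (1 - X 2) ∣ p := by
    refine ⟨face _ _ fun x hx => ?_, face _ _ fun x hx => ?_, face _ _ fun x hx => ?_,
      face _ _ fun x hx => ?_⟩ <;> [
      convert h1 (x 1) (x 2) ?_ ?_ ?_ ?_ using 3;
      convert h2 (x 0) (x 1) ?_ ?_ ?_ ?_ using 3;
      convert h3 (x 1) (x 2) ?_ ?_ ?_ ?_ using 3;
      convert h4 (x 0) (x 2) ?_ ?_ ?_ ?_ using 3]
    all_goals first
      | (ext j; fin_cases j <;> simp)
      | linarith [(hx 0).1, (hx 0).2, (hx 1).1, (hx 1).2, (hx 2).1, (hx 2).2]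
  have hprime (i : Fin 3) (hi : i ≠ 2) : Prime (X i - (1 - X 2) : MvPolynomial (Fin 3) ℝ) :=
    prime_X_sub_of_notMem_vars i _ fun h => hi (by simpa [vars_X] using vars_sub_subset 1 h)
  rw [show (X 0 * X 2 * (X 0 + X 2 - 1) * (X 1 + X 2 - 1) : MvPolynomial (Fin 3) ℝ) =
    (X 0 - 0) * (X 2 - 0) * (X 0 - (1 - X 2)) * (X 1 - (1 - X 2)) by ring]
  refine mul_dvd_of_dvd_of_prime (mul_dvd_of_dvd_of_prime (mul_dvd_of_dvd_of_prime hξ hζ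
    (by simpa using X_prime) ?_) hξζ (hprime 0 (by decide)) ?_) hηζ (hprime 1 (by decide)) ?_
  · exact not_dvd_of_map_eq_zero (eval ![1, 0, 0]) (by simp) (by simp)
  · exact not_dvd_of_map_eq_zero (eval ![1 / 2, 0, 1 / 2]) (by simp; norm_num) (by simp)
  · exact not_dvd_of_map_eq_zero (eval ![1, 1 / 2, 1 / 2]) (by simp; norm_num) (by simp)
end

section
/- For z > −1 the Jacobian matrix Dφ of φ at (x,y,z) has determinant (1+z)^{−4}, and for every measurable function f : ℝ³ → [0,∞] one has the change-of-variables identity ∫_{Ω°} f dλ = ∫_{Ω∞°} f(φ(x,y,z))·(1+z)^{−4} dλ(x,y,z), where λ is three-dimensional Lebesgue measure. (In particular φ pulls L²(Ω) back isometrically to the (1+z)^{−4}-weighted L² space on Ω∞.) -/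
open MeasureTheory

noncomputable section

/-- The interior `Ω°` of the finite pyramid. -/
def PyrInt : Set (ℝ × ℝ × ℝ) :=
  {p | 0 < p.1 ∧ 0 < p.2.1 ∧ 0 < p.2.2 ∧ p.1 < 1 - p.2.2 ∧ p.2.1 < 1 - p.2.2}

/-- The interior `Ω∞° = (0,1) × (0,1) × (0,∞)` of the infinite pyramid. -/
def PyrInfInt : Set (ℝ × ℝ × ℝ) :=
  {p | 0 < p.1 ∧ p.1 < 1 ∧ 0 < p.2.1 ∧ p.2.1 < 1 ∧ 0 < p.2.2}

/-- The projective map `φ(x,y,z) = (x/(1+z), y/(1+z), z/(1+z))`. -/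
def phi : ℝ × ℝ × ℝ → ℝ × ℝ × ℝ :=
  fun p => (p.1 / (1 + p.2.2), p.2.1 / (1 + p.2.2), p.2.2 / (1 + p.2.2))

/-!
`φ` is the central projection `p ↦ (1 + ℓ p)⁻¹ • p` for the height functional `ℓ p = z`. Its
derivative at `p` is `(1 + ℓ p)⁻¹` times the rank-one perturbation `id - ℓ ⊗ (1 + ℓ p)⁻¹ • p` of
the identity, whose determinant is `1 - ℓ p / (1 + ℓ p) = (1 + ℓ p)⁻¹` by the matrix determinant
lemma; in dimension `n` this gives `(1 + ℓ p)^-(n+1)`. The central projection maps `Ω∞°`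
bijectively onto `Ω°`, with inverse `q ↦ (1 - ℓ q)⁻¹ • q`, so the integral identity is the
change-of-variables formula.
-/

theorem LinearMap.det_id_sub_smulRight {R M : Type*} [CommRing R] [AddCommGroup M] [Module R M]
    [Module.Free R M] [Module.Finite R M] (f : M →ₗ[R] R) (u : M) :
    LinearMap.det (LinearMap.id - f.smulRight u) = 1 - f u := by
  let b := Module.Free.chooseBasis R M
  have hM : LinearMap.toMatrix b b (-f.smulRight u) =
      Matrix.replicateCol Unit (-b.repr u) * Matrix.replicateRow Unit (fun j => f (b j)) := by
    ext i j
    simp [LinearMap.toMatrix_apply, Matrix.mul_apply, mul_comm]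
  have hf : f u = ∑ j, f (b j) * b.repr u j := by
    conv_lhs => rw [← b.sum_repr u]
    simp only [map_sum, map_smul, smul_eq_mul, mul_comm]
  rw [sub_eq_add_neg, ← LinearMap.det_toMatrix b, map_add, LinearMap.toMatrix_id, hM,
    Matrix.det_one_add_replicateCol_mul_replicateRow, hf]
  simp [dotProduct, sub_eq_add_neg]

section CentralProjection

variable {𝕜 E : Type*} [NontriviallyNormedField 𝕜] [NormedAddCommGroup E] [NormedSpace 𝕜 E]
  (ℓ : E →L[𝕜] 𝕜)

def centralProjection (p : E) : E := (1 + ℓ p)⁻¹ • p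

def centralProjectionInv (q : E) : E := (1 - ℓ q)⁻¹ • q

variable {ℓ}

theorem centralProjectionInv_centralProjection {p : E} (hp : 1 + ℓ p ≠ 0) :
    centralProjectionInv ℓ (centralProjection ℓ p) = p := by
  have h : 1 - ℓ (centralProjection ℓ p) = (1 + ℓ p)⁻¹ := by
    simp only [centralProjection, map_smul, smul_eq_mul]
    field_simp
    ring
  rw [centralProjectionInv, h, inv_inv, centralProjection, smul_inv_smul₀ hp]

theorem centralProjection_centralProjectionInv {q : E} (hq : 1 - ℓ q ≠ 0) :
    centralProjection ℓ (centralProjectionInv ℓ q) = q := by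
  have h : 1 + ℓ (centralProjectionInv ℓ q) = (1 - ℓ q)⁻¹ := by
    simp only [centralProjectionInv, map_smul, smul_eq_mul]
    field_simp
    ring
  rw [centralProjection, h, inv_inv, centralProjectionInv, smul_inv_smul₀ hq]

theorem hasFDerivAt_centralProjection {p : E} (hp : 1 + ℓ p ≠ 0) :
    HasFDerivAt (centralProjection ℓ)
      ((1 + ℓ p)⁻¹ • (ContinuousLinearMap.id 𝕜 E - ℓ.smulRight ((1 + ℓ p)⁻¹ • p))) p := by
  have hc : HasFDerivAt (fun q => (1 + ℓ q)⁻¹)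
      ((ContinuousLinearMap.toSpanSingleton 𝕜 (-((1 + ℓ p) ^ 2)⁻¹)).comp ℓ) p :=
    (hasFDerivAt_inv hp).comp p (ℓ.hasFDerivAt.const_add 1)
  refine (hc.smul (hasFDerivAt_id p)).congr_fderiv ?_
  ext v
  simp only [add_apply, smul_apply, sub_apply, ContinuousLinearMap.smulRight_apply,
    ContinuousLinearMap.comp_apply, ContinuousLinearMap.toSpanSingleton_apply,
    ContinuousLinearMap.id_apply, id, ← inv_pow]
  module

theorem det_fderiv_centralProjection [FiniteDimensional 𝕜 E] {p : E} (hp : 1 + ℓ p ≠ 0) :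
    LinearMap.det (fderiv 𝕜 (centralProjection ℓ) p).toLinearMap =
      ((1 + ℓ p) ^ (Module.finrank 𝕜 E + 1))⁻¹ := by
  have h : 1 - (1 + ℓ p)⁻¹ * ℓ p = (1 + ℓ p)⁻¹ := by
    field_simp
    ring
  rw [(hasFDerivAt_centralProjection hp).fderiv, ContinuousLinearMap.toLinearMap_smul,
    ContinuousLinearMap.toLinearMap_sub, ContinuousLinearMap.coe_id,
    ContinuousLinearMap.coe_smulRight, LinearMap.det_smul, LinearMap.det_id_sub_smulRight,
    ContinuousLinearMap.coe_coe, map_smul, smul_eq_mul, h, ← pow_succ, inv_pow]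

end CentralProjection

def heightCoord : ℝ × ℝ × ℝ →L[ℝ] ℝ :=
  (ContinuousLinearMap.snd ℝ ℝ ℝ).comp (ContinuousLinearMap.snd ℝ ℝ (ℝ × ℝ))

@[simp]
theorem heightCoord_apply (p : ℝ × ℝ × ℝ) : heightCoord p = p.2.2 := rfl

theorem phi_eq_centralProjection : phi = centralProjection heightCoord := by
  funext p
  ext <;> simp [phi, centralProjection, div_eq_inv_mul]

theorem differentiableAt_phi {p : ℝ × ℝ × ℝ} (hz : -1 < p.2.2) : DifferentiableAt ℝ phi p := by
  rw [phi_eq_centralProjection]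
  exact (hasFDerivAt_centralProjection (by simp; linarith)).differentiableAt

theorem det_fderiv_phi {p : ℝ × ℝ × ℝ} (hz : -1 < p.2.2) :
    LinearMap.det (fderiv ℝ phi p).toLinearMap = 1 / (1 + p.2.2) ^ 4 := by
  rw [phi_eq_centralProjection, det_fderiv_centralProjection (by simp; linarith)]
  simp [Module.finrank_prod]

theorem mapsTo_phi_pyrInfInt : Set.MapsTo phi PyrInfInt PyrInt := by
  rintro ⟨x, y, z⟩ ⟨hx0, hx1, hy0, hy1, hz⟩
  dsimp only at *
  simp only [phi, PyrInt, Set.mem_ofPred_eq]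
  have hc : 0 < 1 + z := by linarith
  have hgap : 1 - z / (1 + z) = 1 / (1 + z) := by field_simp; ring
  refine ⟨by positivity, by positivity, by positivity, ?_, ?_⟩ <;> rw [hgap] <;> gcongr

theorem mapsTo_centralProjectionInv_pyrInt :
    Set.MapsTo (centralProjectionInv heightCoord) PyrInt PyrInfInt := by
  rintro ⟨x, y, z⟩ ⟨hx0, hy0, hz0, hx, hy⟩
  dsimp only at *
  have hd : 0 < 1 - z := by linarith
  simp only [centralProjectionInv, PyrInfInt, Set.mem_ofPred_eq, Prod.smul_mk, smul_eq_mul,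
    heightCoord_apply, inv_mul_lt_iff₀ hd, mul_one]
  exact ⟨by positivity, hx, by positivity, hy, by positivity⟩

theorem bijOn_phi_pyrInfInt : Set.BijOn phi PyrInfInt PyrInt := by
  have hinv : Set.InvOn (centralProjectionInv heightCoord) phi PyrInfInt PyrInt := by
    rw [phi_eq_centralProjection]
    exact ⟨fun p hp => centralProjectionInv_centralProjection (by simp; linarith [hp.2.2.2.2]),
      fun q hq => centralProjection_centralProjectionInv (by simp; linarith [hq.1, hq.2.2.2.1])⟩
  exact hinv.bijOn mapsTo_phi_pyrInfInt mapsTo_centralProjectionInv_pyrInt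

instance : (volume : Measure (ℝ × ℝ)).IsAddHaarMeasure := Measure.prod.instIsAddHaarMeasure _ _

instance : (volume : Measure (ℝ × ℝ × ℝ)).IsAddHaarMeasure :=
  Measure.prod.instIsAddHaarMeasure _ _

theorem measurableSet_pyrInfInt : MeasurableSet PyrInfInt := by
  unfold PyrInfInt
  measurability

/-- for `z > −1` the Jacobian of `φ` has determinant `(1+z)⁻⁴`, and for every
measurable `f : ℝ³ → [0,∞]` one has the change-of-variables identity
`∫_{Ω°} f dλ = ∫_{Ω∞°} f(φ(x,y,z))·(1+z)⁻⁴ dλ(x,y,z)`. -/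
theorem phi_jacobian_and_change_of_variables :
    (∀ p : ℝ × ℝ × ℝ, -1 < p.2.2 →
      LinearMap.det (fderiv ℝ phi p).toLinearMap = 1 / (1 + p.2.2) ^ 4) ∧
    (∀ f : ℝ × ℝ × ℝ → ENNReal, Measurable f →
      ∫⁻ q in PyrInt, f q ∂volume =
        ∫⁻ p in PyrInfInt, f (phi p) * ENNReal.ofReal (1 / (1 + p.2.2) ^ 4) ∂volume) := by
  refine ⟨fun p hz => det_fderiv_phi hz, fun f _ => ?_⟩
  have hz : ∀ p ∈ PyrInfInt, -1 < p.2.2 := fun p hp => by linarith [hp.2.2.2.2]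
  rw [← bijOn_phi_pyrInfInt.image_eq, lintegral_image_eq_lintegral_abs_det_fderiv_mul volume
    measurableSet_pyrInfInt
    (fun p hp => (differentiableAt_phi (hz p hp)).hasFDerivAt.hasFDerivWithinAt)
    bijOn_phi_pyrInfInt.injOn f]
  refine setLIntegral_congr_fun measurableSet_pyrInfInt fun p hp => ?_
  have hc : 0 < 1 + p.2.2 := by linarith [hz p hp]
  rw [ContinuousLinearMap.det, det_fderiv_phi (hz p hp),
    abs_of_pos (one_div_pos.2 (pow_pos hc 4)), mul_comm]
end
end

section
/- Let k ≥ 1 and let a, b, c be integers with 0 ≤ a ≤ k, 0 ≤ b ≤ k, 0 ≤ c ≤ k−1. The rational function v(ξ,η,ζ) = ξ^a η^b ζ^c (1−ζ)^{k−a−b−c} (equivalently, ξ^a η^b ζ^c/(1−ζ)^{a+b+c−k}) is differentiable at every point of Ω°, the function v² is Lebesgue-integrable over Ω°, and the squared Euclidean norm of the gradient of v is Lebesgue-integrable over Ω°; i.e. v ∈ H¹(Ω). (This is the statement that x^a y^b z^c/(1+z)^k belongs to the weighted space H¹_w(Ω∞).) -/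
open MeasureTheory

noncomputable section

/-- The rational function `v(ξ,η,ζ) = ξ^a η^b ζ^c (1−ζ)^{k−a−b−c}` (integer power). -/
def vFun (k a b c : ℕ) : EuclideanSpace ℝ (Fin 3) → ℝ :=
  fun p => p 0 ^ a * p 1 ^ b * p 2 ^ c * (1 - p 2) ^ ((k : ℤ) - a - b - c)

/-!
Away from the apex, a point of `Ω` satisfies `0 ≤ ξ, η ≤ 1 - ζ` and `0 ≤ ζ < 1`, so a monomial
`ξ^p η^q ζ^r (1 - ζ)^m` with `p + q + m ≥ 0` is at most `1` there: a negative power of `1 - ζ` is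
absorbed by `ξ^p η^q`. The function `v` is such a monomial with `p + q + m = k - c`, and each of
its partial derivatives is a combination of such monomials with `p + q + m ≥ k - c - 1 ≥ 0`.
So `v` and `∇v` are bounded on `Ω°`, which has finite volume.
-/

open Filter Topology

local notation "ℝ³" => EuclideanSpace ℝ (Fin 3)

theorem isBounded_pyr : Bornology.IsBounded Pyr := by
  have hcube := (isCompact_Icc (a := (0 : Fin 3 → ℝ)) (b := 1)).image (PiLp.continuous_toLp 2 _)
  refine hcube.isBounded.subset ?_
  rintro p ⟨h0, h1, h2, h3, h4⟩
  refine ⟨WithLp.ofLp p, ⟨fun i => ?_, fun i => ?_⟩, rfl⟩ <;> fin_cases i <;>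
    simp only [Fin.zero_eta, Fin.mk_one, Fin.reduceFinMk, Pi.zero_apply, Pi.one_apply] <;> linarith

theorem lt_one_of_mem_interior_pyr {x : ℝ³} (hx : x ∈ interior Pyr) : x 2 < 1 := by
  set e : ℝ³ := EuclideanSpace.single 0 1
  have hline : Tendsto (fun t : ℝ => x + t • e) (𝓝[>] 0) (𝓝 x) :=
    tendsto_nhdsWithin_of_tendsto_nhds <|
      (by fun_prop : Continuous fun t : ℝ => x + t • e).tendsto' 0 x (by simp)
  obtain ⟨t, ⟨-, -, -, hle, -⟩, ht : 0 < t⟩ :=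
    ((hline.eventually (mem_interior_iff_mem_nhds.1 hx)).and self_mem_nhdsWithin).exists
  have he0 : (x + t • e) 0 = x 0 + t := by simp [e]
  have he2 : (x + t • e) 2 = x 2 := by simp [e]
  have hx0 : 0 ≤ x 0 := (interior_subset hx).1
  linarith

def pyrMonomial (p q r : ℕ) (m : ℤ) (x : ℝ³) : ℝ :=
  x 0 ^ p * x 1 ^ q * x 2 ^ r * (1 - x 2) ^ m

theorem abs_pyrMonomial_le_one {p q r : ℕ} {m : ℤ} (hm : 0 ≤ (p : ℤ) + q + m) {x : ℝ³}
    (hx : x ∈ Pyr) (hx2 : x 2 < 1) : |pyrMonomial p q r m x| ≤ 1 := by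
  obtain ⟨h0, h1, h2, h3, h4⟩ := hx
  have hs : 0 < 1 - x 2 := by linarith
  have hnonneg : 0 ≤ pyrMonomial p q r m x := by unfold pyrMonomial; positivity
  rw [abs_of_nonneg hnonneg]
  calc pyrMonomial p q r m x ≤ (1 - x 2) ^ p * (1 - x 2) ^ q * 1 * (1 - x 2) ^ m := by
        unfold pyrMonomial
        gcongr
        exact pow_le_one₀ h2 hx2.le
    _ = (1 - x 2) ^ ((p : ℤ) + q + m) := by
        rw [zpow_add₀ hs.ne', zpow_add₀ hs.ne']
        simp
    _ ≤ 1 := zpow_le_one₀ hs (by linarith) hm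

/-- The truncated exponents `p - 1`, `q - 1`, `r - 1` are harmless: at `0` they are multiplied
by `0`. -/
theorem hasFDerivAt_pyrMonomial (p q r : ℕ) (m : ℤ) {x : ℝ³} (hx : x 2 ≠ 1) :
    HasFDerivAt (pyrMonomial p q r m)
      ((p * pyrMonomial (p - 1) q r m x) • EuclideanSpace.proj (𝕜 := ℝ) 0
        + (q * pyrMonomial p (q - 1) r m x) • EuclideanSpace.proj (𝕜 := ℝ) 1
        + (r * pyrMonomial p q (r - 1) m x - m * pyrMonomial p q r (m - 1) x) •
          EuclideanSpace.proj (𝕜 := ℝ) 2) x := by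
  have hcoord (i : Fin 3) :
      HasFDerivAt (fun y : ℝ³ => y i) (EuclideanSpace.proj (𝕜 := ℝ) i) x :=
    (EuclideanSpace.proj (𝕜 := ℝ) (ι := Fin 3) i).hasFDerivAt
  have hs : HasDerivAt (fun t : ℝ => (1 - t) ^ m) (m * (1 - x 2) ^ (m - 1) * -1) (x 2) :=
    (hasDerivAt_zpow m _ (Or.inl (sub_ne_zero.2 hx.symm))).comp _
      ((hasDerivAt_id _).const_sub 1)
  have h := (((hasDerivAt_pow p _).comp_hasFDerivAt x (hcoord 0)).mul
    ((hasDerivAt_pow q _).comp_hasFDerivAt x (hcoord 1))).mul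
    ((hasDerivAt_pow r _).comp_hasFDerivAt x (hcoord 2)) |>.mul (hs.comp_hasFDerivAt x (hcoord 2))
  refine HasFDerivAt.congr_fderiv (f := pyrMonomial p q r m) h (ContinuousLinearMap.ext fun v => ?_)
  simp only [pyrMonomial, Pi.mul_apply, Function.comp_apply, smul_add, add_apply, smul_apply,
    PiLp.proj_apply, smul_eq_mul]
  ring

theorem EuclideanSpace.norm_proj_le_one {𝕜 ι : Type*} [RCLike 𝕜] [Fintype ι] (i : ι) :
    ‖EuclideanSpace.proj (𝕜 := 𝕜) i‖ ≤ 1 :=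
  ContinuousLinearMap.opNorm_le_bound _ zero_le_one fun y => by
    simpa using PiLp.norm_apply_le y i

theorem norm_smul_proj_add_smul_proj_add_smul_proj_le (α β γ : ℝ) :
    ‖α • EuclideanSpace.proj (𝕜 := ℝ) (ι := Fin 3) 0 + β • EuclideanSpace.proj 1
      + γ • EuclideanSpace.proj 2‖ ≤ |α| + |β| + |γ| := by
  have h (t : ℝ) (i : Fin 3) : ‖t • EuclideanSpace.proj (𝕜 := ℝ) (ι := Fin 3) i‖ ≤ |t| := by
    rw [norm_smul, Real.norm_eq_abs]
    exact mul_le_of_le_one_right (abs_nonneg t) (EuclideanSpace.norm_proj_le_one i)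
  exact norm_add₃_le.trans (add_le_add_three (h α 0) (h β 1) (h γ 2))

theorem abs_natCast_mul_le {n : ℕ} {y : ℝ} (hy : n ≠ 0 → |y| ≤ 1) : |n * y| ≤ n := by
  rcases eq_or_ne n 0 with rfl | hn
  · simp
  · rw [abs_mul, Nat.abs_cast]
    exact mul_le_of_le_one_right n.cast_nonneg (hy hn)

theorem vFun_eq_pyrMonomial (k a b c : ℕ) : vFun k a b c = pyrMonomial a b c (k - a - b - c) :=
  rfl

theorem abs_vFun_le_one {k a b c : ℕ} (hck : c ≤ k) {x : ℝ³} (hx : x ∈ interior Pyr) :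
    |vFun k a b c x| ≤ 1 :=
  abs_pyrMonomial_le_one (by omega) (interior_subset hx) (lt_one_of_mem_interior_pyr hx)

theorem norm_fderiv_vFun_le {k a b c : ℕ} (hck : c < k) {x : ℝ³} (hx : x ∈ interior Pyr) :
    ‖fderiv ℝ (vFun k a b c) x‖ ≤ a + b + c + |((k - a - b - c : ℤ) : ℝ)| := by
  set m : ℤ := k - a - b - c
  have hxP := interior_subset hx
  have hx2 := lt_one_of_mem_interior_pyr hx
  rw [vFun_eq_pyrMonomial, (hasFDerivAt_pyrMonomial a b c m hx2.ne).fderiv]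
  refine (norm_smul_proj_add_smul_proj_add_smul_proj_le _ _ _).trans ?_
  have h₀ : |a * pyrMonomial (a - 1) b c m x| ≤ a :=
    abs_natCast_mul_le fun ha => abs_pyrMonomial_le_one (by omega) hxP hx2
  have h₁ : |b * pyrMonomial a (b - 1) c m x| ≤ b :=
    abs_natCast_mul_le fun hb => abs_pyrMonomial_le_one (by omega) hxP hx2
  have h₂ : |c * pyrMonomial a b (c - 1) m x| ≤ c :=
    abs_natCast_mul_le fun _ => abs_pyrMonomial_le_one (by omega) hxP hx2
  have h₃ : |m * pyrMonomial a b c (m - 1) x| ≤ |(m : ℝ)| := by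
    rw [abs_mul]
    exact mul_le_of_le_one_right (abs_nonneg _) (abs_pyrMonomial_le_one (by omega) hxP hx2)
  have := abs_sub (c * pyrMonomial a b (c - 1) m x) (m * pyrMonomial a b c (m - 1) x)
  linarith

theorem integrableOn_norm_sq_of_norm_le {α E : Type*} [MeasurableSpace α] [NormedAddCommGroup E]
    {μ : Measure α} {s : Set α} {f : α → E} (hs : μ s < ⊤) (hms : MeasurableSet s)
    (hf : AEStronglyMeasurable f (μ.restrict s)) {C : ℝ} (hC : ∀ x ∈ s, ‖f x‖ ≤ C) :
    IntegrableOn (fun x => ‖f x‖ ^ 2) s μ := by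
  refine IntegrableOn.of_bound hs (hf.norm.pow 2) (C ^ 2) ?_
  filter_upwards [self_mem_ae_restrict hms] with x hx
  rw [norm_pow, norm_norm]
  exact pow_le_pow_left₀ (norm_nonneg _) (hC x hx) 2

theorem vFun_mem_H1_general (k a b c : ℕ) (hk : 1 ≤ k) (hc : c ≤ k - 1) :
    (∀ x ∈ interior Pyr, DifferentiableAt ℝ (vFun k a b c) x) ∧
    IntegrableOn (fun x => (vFun k a b c x) ^ 2) (interior Pyr) volume ∧
    IntegrableOn (fun x => ‖fderiv ℝ (vFun k a b c) x‖ ^ 2) (interior Pyr) volume := by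
  have hck : c < k := by omega
  have hfin : volume (interior Pyr) < ⊤ := (isBounded_pyr.subset interior_subset).measure_lt_top
  have hdiff : ∀ x ∈ interior Pyr, DifferentiableAt ℝ (vFun k a b c) x := fun x hx =>
    (hasFDerivAt_pyrMonomial a b c _ (lt_one_of_mem_interior_pyr hx).ne).differentiableAt
  refine ⟨hdiff, ?_, ?_⟩
  · have hcont : ContinuousOn (vFun k a b c) (interior Pyr) := fun x hx =>
      (hdiff x hx).continuousAt.continuousWithinAt
    simpa using integrableOn_norm_sq_of_norm_le hfin measurableSet_interior
      (hcont.aestronglyMeasurable measurableSet_interior) fun x hx => abs_vFun_le_one hck.le hx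
  · exact integrableOn_norm_sq_of_norm_le hfin measurableSet_interior
      (measurable_fderiv ℝ _).aestronglyMeasurable fun x hx => norm_fderiv_vFun_le hck hx

/-- for `k ≥ 1`, `0 ≤ a ≤ k`, `0 ≤ b ≤ k`, `0 ≤ c ≤ k−1`, the function
`v = ξ^a η^b ζ^c (1−ζ)^{k−a−b−c}` is differentiable on `Ω°`, `v²` is integrable on `Ω°`,
and the squared Euclidean norm of its gradient is integrable on `Ω°`; i.e. `v ∈ H¹(Ω)`. -/
theorem vFun_mem_H1 (k a b c : ℕ) (hk : 1 ≤ k) (ha : a ≤ k) (hb : b ≤ k)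
    (hc : c ≤ k - 1) :
    (∀ x ∈ interior Pyr, DifferentiableAt ℝ (vFun k a b c) x) ∧
    IntegrableOn (fun x => (vFun k a b c x) ^ 2) (interior Pyr) volume ∧
    IntegrableOn (fun x => ‖fderiv ℝ (vFun k a b c) x‖ ^ 2) (interior Pyr) volume :=
  vFun_mem_H1_general k a b c hk hc

end
end

section
/- Fix an integer k ≥ 1. For every function u in U̅^{(0),k}(Ω∞) = Q^{k,k,k−1}_k + span{(x,y,z) ↦ z^k/(1+z)^k} (all such u are smooth on Ω∞°), the gradient ∇u, viewed as a function Ω∞° → ℝ³, belongs to the space (Q^{k−1,k,k−1}_{k+1} × Q^{k,k−1,k−1}_{k+1} × Q^{k,k,k−2}_{k+1}) + span{ (x,y,z) ↦ (z^{k−1}/(1+z)^{k+1})·( z·∂r/∂x, z·∂r/∂y, −r ) : r ∈ Q^{k,k}[x,y] }; i.e. the gradient maps U̅^{(0),k}(Ω∞) into U̅^{(1),k}(Ω∞). -/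
noncomputable section

/-- The weighted monomial `x^a y^b z^c / (1+z)^k`. -/
def qmon (k a b c : ℕ) : ℝ × ℝ × ℝ → ℝ :=
  fun p => p.1 ^ a * p.2.1 ^ b * p.2.2 ^ c / (1 + p.2.2) ^ k

/-- The space `Q^{l,m,n}_k`: the real span of `x^a y^b z^c/(1+z)^k` over `0 ≤ a ≤ l`,
`0 ≤ b ≤ m`, `0 ≤ c ≤ n` (the zero space if some bound is negative). -/
def Qsp (l m n : ℤ) (k : ℕ) : Submodule ℝ ((ℝ × ℝ × ℝ) → ℝ) :=
  Submodule.span ℝ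
    {f | ∃ a b c : ℕ, (a : ℤ) ≤ l ∧ (b : ℤ) ≤ m ∧ (c : ℤ) ≤ n ∧ f = qmon k a b c}

/-- The underlying space `U̅^{(0),k}(Ω∞) = Q^{k,k,k−1}_k + span{z^k/(1+z)^k}`. -/
def Ubar0 (k : ℕ) : Submodule ℝ ((ℝ × ℝ × ℝ) → ℝ) :=
  Qsp k k ((k : ℤ) - 1) k ⊔
    Submodule.span ℝ {fun p : ℝ × ℝ × ℝ => p.2.2 ^ k / (1 + p.2.2) ^ k}

/-! The gradient of `x^a y^b z^c/(1+z)^k` has common denominator `(1+z)^{k+1}`: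
`∂ₓ = a x^{a-1} y^b (z^c + z^{c+1})/(1+z)^{k+1}`, similarly for `∂_y`, and
`∂_z = x^a y^b (c z^{c-1} + (c-k) z^c)/(1+z)^{k+1}`. For `c ≤ k-2` every term lies in the
`Q`-spaces of `U̅^{(1),k}`; for `c = k-1` the terms that overflow (`z^k` in `∂ₓ, ∂_y`,
`z^{k-1}` in `∂_z`) are exactly the `r`-part for `r = x^a y^b`, and the gradient of
`z^k/(1+z)^k`, `(0, 0, k z^{k-1}/(1+z)^{k+1})`, is the `r`-part for `r = -k`. Differentiability
and the representation of the gradient are preserved by linear combinations, so checking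
generators suffices.
-/

open MvPolynomial

theorem monomial_mem_restrictDegree {σ R : Type*} [CommSemiring R] {m : ℕ} {s : σ →₀ ℕ}
    (hs : ∀ i, s i ≤ m) (a : R) : monomial s a ∈ restrictDegree σ R m :=
  (mem_restrictDegree _ _ _).2 fun t ht i => by
    rw [Finset.mem_singleton.1 (support_monomial_subset ht)]; exact hs i

theorem X_pow_mul_X_pow_mem_restrictDegree {R : Type*} [CommSemiring R] {k a b : ℕ}
    (ha : a ≤ k) (hb : b ≤ k) :
    (X 0 ^ a * X 1 ^ b : MvPolynomial (Fin 2) R) ∈ restrictDegree (Fin 2) R k := by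
  rw [X_pow_eq_monomial, X_pow_eq_monomial, monomial_mul, one_mul]
  exact monomial_mem_restrictDegree (fun i => by fin_cases i <;> simpa) _

theorem eval_X_pow_mul_X_pow {R : Type*} [CommSemiring R] (a b : ℕ) (x y : R) :
    eval ![x, y] (X 0 ^ a * X 1 ^ b : MvPolynomial (Fin 2) R) = x ^ a * y ^ b := by
  simp

theorem eval_pderiv_zero_X_pow_mul_X_pow {R : Type*} [CommSemiring R] (a b : ℕ) (x y : R) :
    eval ![x, y] (pderiv 0 (X 0 ^ a * X 1 ^ b : MvPolynomial (Fin 2) R)) =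
      a * x ^ (a - 1) * y ^ b := by
  simp [mul_comm]

theorem eval_pderiv_one_X_pow_mul_X_pow {R : Type*} [CommSemiring R] (a b : ℕ) (x y : R) :
    eval ![x, y] (pderiv 1 (X 0 ^ a * X 1 ^ b : MvPolynomial (Fin 2) R)) =
      b * x ^ a * y ^ (b - 1) := by
  simp [mul_comm, mul_left_comm, mul_assoc]

theorem qmon_mem_Qsp {l m n : ℤ} {k a b c : ℕ} (ha : (a : ℤ) ≤ l) (hb : (b : ℤ) ≤ m)
    (hc : (c : ℤ) ≤ n) : qmon k a b c ∈ Qsp l m n k :=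
  Submodule.subset_span ⟨a, b, c, ha, hb, hc, rfl⟩

theorem exists_hasFDerivAt_qmon (k a b c : ℕ) {p : ℝ × ℝ × ℝ} (hp : 1 + p.2.2 ≠ 0) :
    ∃ L : (ℝ × ℝ × ℝ) →L[ℝ] ℝ, HasFDerivAt (qmon k a b c) L p ∧
      L (1, 0, 0) = a * (qmon (k + 1) (a - 1) b c p + qmon (k + 1) (a - 1) b (c + 1) p) ∧
      L (0, 1, 0) = b * (qmon (k + 1) a (b - 1) c p + qmon (k + 1) a (b - 1) (c + 1) p) ∧
      L (0, 0, 1) = c * qmon (k + 1) a b (c - 1) p + ((c : ℝ) - k) * qmon (k + 1) a b c p := by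
  have hx : HasFDerivAt (fun q : ℝ × ℝ × ℝ => q.1) (ContinuousLinearMap.fst ℝ ℝ (ℝ × ℝ)) p :=
    hasFDerivAt_fst
  have hyz : HasFDerivAt (fun q : ℝ × ℝ × ℝ => q.2) (ContinuousLinearMap.snd ℝ ℝ (ℝ × ℝ)) p :=
    hasFDerivAt_snd
  have hy := hasFDerivAt_fst.comp p hyz
  have hz := hasFDerivAt_snd.comp p hyz
  have H := (((hx.pow a).mul (hy.pow b)).mul (hz.pow c)).mul
    ((hasDerivAt_inv (pow_ne_zero k hp)).comp_hasFDerivAt p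
      (((hasFDerivAt_const 1 p).add hz).pow k))
  have hq : qmon k a b c =
      fun q : ℝ × ℝ × ℝ => q.1 ^ a * q.2.1 ^ b * q.2.2 ^ c * ((1 + q.2.2) ^ k)⁻¹ := by
    funext q; simp [qmon, div_eq_mul_inv]
  refine ⟨_, by rw [hq]; exact H, ?_, ?_, ?_⟩
  all_goals simp only [qmon, add_apply, smul_apply, ContinuousLinearMap.comp_apply,
    ContinuousLinearMap.coe_fst', ContinuousLinearMap.coe_snd', zero_apply,
    Function.comp_apply, Pi.mul_apply, Pi.add_apply, smul_eq_mul, nsmul_eq_mul]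
  · field_simp; ring
  · field_simp; ring
  · rcases k with _ | k <;> rcases c with _ | c <;>
      simp only [Nat.add_sub_cancel, zero_tsub, pow_zero, Nat.cast_zero, Nat.cast_succ] <;>
      field_simp <;> ring

/-- The functions differentiable on `Ω∞°` whose gradient lies in `U̅^{(1),k}(Ω∞)` there;
`restrictDegree (Fin 2) ℝ k` is `Q^{k,k}[x,y]`. -/
def gradPreimageUbar1 (k : ℕ) : Submodule ℝ ((ℝ × ℝ × ℝ) → ℝ) where
  carrier := {u | (∀ p ∈ PyrInfInt, DifferentiableAt ℝ u p) ∧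
    ∃ v₁ ∈ Qsp ((k : ℤ) - 1) k ((k : ℤ) - 1) (k + 1),
    ∃ v₂ ∈ Qsp k ((k : ℤ) - 1) ((k : ℤ) - 1) (k + 1),
    ∃ v₃ ∈ Qsp k k ((k : ℤ) - 2) (k + 1),
    ∃ r ∈ restrictDegree (Fin 2) ℝ k, ∀ p ∈ PyrInfInt,
      fderiv ℝ u p (1, 0, 0) =
        v₁ p + p.2.2 ^ (k - 1) / (1 + p.2.2) ^ (k + 1) * (p.2.2 * eval ![p.1, p.2.1] (pderiv 0 r)) ∧
      fderiv ℝ u p (0, 1, 0) =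
        v₂ p + p.2.2 ^ (k - 1) / (1 + p.2.2) ^ (k + 1) * (p.2.2 * eval ![p.1, p.2.1] (pderiv 1 r)) ∧
      fderiv ℝ u p (0, 0, 1) =
        v₃ p - p.2.2 ^ (k - 1) / (1 + p.2.2) ^ (k + 1) * eval ![p.1, p.2.1] r}
  zero_mem' := ⟨fun _ _ => differentiableAt_const 0, 0, zero_mem _, 0, zero_mem _, 0, zero_mem _,
    0, zero_mem _, fun p _ => by simp⟩
  add_mem' := by
    rintro u w ⟨hu, v₁, hv₁, v₂, hv₂, v₃, hv₃, r, hr, hgu⟩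
      ⟨hw, w₁, hw₁, w₂, hw₂, w₃, hw₃, s, hs, hgw⟩
    refine ⟨fun p hp => (hu p hp).add (hw p hp), v₁ + w₁, add_mem hv₁ hw₁, v₂ + w₂,
      add_mem hv₂ hw₂, v₃ + w₃, add_mem hv₃ hw₃, r + s, add_mem hr hs, fun p hp => ?_⟩
    obtain ⟨hu₁, hu₂, hu₃⟩ := hgu p hp
    obtain ⟨hw₁, hw₂, hw₃⟩ := hgw p hp
    simp only [fderiv_add (hu p hp) (hw p hp), add_apply, Pi.add_apply,
      map_add, hu₁, hu₂, hu₃, hw₁, hw₂, hw₃]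
    exact ⟨by ring, by ring, by ring⟩
  smul_mem' := by
    rintro t u ⟨hu, v₁, hv₁, v₂, hv₂, v₃, hv₃, r, hr, hgu⟩
    refine ⟨fun p hp => (hu p hp).const_smul t, t • v₁, Submodule.smul_mem _ t hv₁, t • v₂,
      Submodule.smul_mem _ t hv₂, t • v₃, Submodule.smul_mem _ t hv₃, t • r,
      Submodule.smul_mem _ t hr, fun p hp => ?_⟩
    obtain ⟨hu₁, hu₂, hu₃⟩ := hgu p hp
    simp only [fderiv_const_smul (hu p hp), smul_apply, Pi.smul_apply,
      smul_eq_mul, Derivation.map_smul, smul_eval, hu₁, hu₂, hu₃]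
    exact ⟨by ring, by ring, by ring⟩

theorem qmon_mem_gradPreimageUbar1 {k a b c : ℕ} {v₁ v₂ v₃ : (ℝ × ℝ × ℝ) → ℝ}
    (hv₁ : v₁ ∈ Qsp ((k : ℤ) - 1) k ((k : ℤ) - 1) (k + 1))
    (hv₂ : v₂ ∈ Qsp k ((k : ℤ) - 1) ((k : ℤ) - 1) (k + 1))
    (hv₃ : v₃ ∈ Qsp k k ((k : ℤ) - 2) (k + 1)) {r : MvPolynomial (Fin 2) ℝ}
    (hr : r ∈ restrictDegree (Fin 2) ℝ k)
    (h : ∀ p ∈ PyrInfInt,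
      a * (qmon (k + 1) (a - 1) b c p + qmon (k + 1) (a - 1) b (c + 1) p) =
        v₁ p + p.2.2 ^ (k - 1) / (1 + p.2.2) ^ (k + 1) * (p.2.2 * eval ![p.1, p.2.1] (pderiv 0 r)) ∧
      b * (qmon (k + 1) a (b - 1) c p + qmon (k + 1) a (b - 1) (c + 1) p) =
        v₂ p + p.2.2 ^ (k - 1) / (1 + p.2.2) ^ (k + 1) * (p.2.2 * eval ![p.1, p.2.1] (pderiv 1 r)) ∧
      c * qmon (k + 1) a b (c - 1) p + ((c : ℝ) - k) * qmon (k + 1) a b c p =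
        v₃ p - p.2.2 ^ (k - 1) / (1 + p.2.2) ^ (k + 1) * eval ![p.1, p.2.1] r) :
    qmon k a b c ∈ gradPreimageUbar1 k := by
  have hderiv (p : ℝ × ℝ × ℝ) (hp : p ∈ PyrInfInt) :=
    exists_hasFDerivAt_qmon k a b c (p := p) (by linarith [hp.2.2.2.2])
  refine ⟨fun p hp => (hderiv p hp).choose_spec.1.differentiableAt,
    v₁, hv₁, v₂, hv₂, v₃, hv₃, r, hr, fun p hp => ?_⟩
  obtain ⟨L, hL, h₁, h₂, h₃⟩ := hderiv p hp
  rw [hL.fderiv, h₁, h₂, h₃]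
  exact h p hp

theorem qmon_mem_gradPreimageUbar1_of_add_two_le {k a b c : ℕ} (ha : a ≤ k) (hb : b ≤ k)
    (hc : c + 2 ≤ k) : qmon k a b c ∈ gradPreimageUbar1 k :=
  qmon_mem_gradPreimageUbar1
    (v₁ := (a : ℝ) • (qmon (k + 1) (a - 1) b c + qmon (k + 1) (a - 1) b (c + 1)))
    (v₂ := (b : ℝ) • (qmon (k + 1) a (b - 1) c + qmon (k + 1) a (b - 1) (c + 1)))
    (v₃ := (c : ℝ) • qmon (k + 1) a b (c - 1) + ((c : ℝ) - k) • qmon (k + 1) a b c)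
    (Submodule.smul_mem _ _ (add_mem (qmon_mem_Qsp (by omega) (by omega) (by omega))
      (qmon_mem_Qsp (by omega) (by omega) (by omega))))
    (Submodule.smul_mem _ _ (add_mem (qmon_mem_Qsp (by omega) (by omega) (by omega))
      (qmon_mem_Qsp (by omega) (by omega) (by omega))))
    (add_mem (Submodule.smul_mem _ _ (qmon_mem_Qsp (by omega) (by omega) (by omega)))
      (Submodule.smul_mem _ _ (qmon_mem_Qsp (by omega) (by omega) (by omega))))
    (zero_mem _) fun p _ => by simp

theorem qmon_mem_gradPreimageUbar1_of_add_one_eq {k a b c : ℕ} (ha : a ≤ k) (hb : b ≤ k)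
    (hc : c + 1 = k) : qmon k a b c ∈ gradPreimageUbar1 k := by
  have hv₃ : (c : ℝ) • qmon (k + 1) a b (c - 1) ∈ Qsp k k ((k : ℤ) - 2) (k + 1) := by
    rcases Nat.eq_zero_or_pos c with rfl | hc₀
    · simp
    · exact Submodule.smul_mem _ _ (qmon_mem_Qsp (by omega) (by omega) (by omega))
  refine qmon_mem_gradPreimageUbar1 (v₁ := (a : ℝ) • qmon (k + 1) (a - 1) b c)
    (v₂ := (b : ℝ) • qmon (k + 1) a (b - 1) c)
    (Submodule.smul_mem _ _ (qmon_mem_Qsp (by omega) (by omega) (by omega)))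
    (Submodule.smul_mem _ _ (qmon_mem_Qsp (by omega) (by omega) (by omega))) hv₃
    (X_pow_mul_X_pow_mem_restrictDegree ha hb) fun p hp => ?_
  subst hc
  have hz : 1 + p.2.2 ≠ 0 := by linarith [hp.2.2.2.2]
  simp only [qmon, Pi.smul_apply, smul_eq_mul, eval_X_pow_mul_X_pow,
    eval_pderiv_zero_X_pow_mul_X_pow, eval_pderiv_one_X_pow_mul_X_pow, add_tsub_cancel_right,
    Nat.cast_add, Nat.cast_one]
  refine ⟨?_, ?_, ?_⟩ <;> field_simp <;> ring

theorem qmon_zero_zero_self_mem_gradPreimageUbar1 (k : ℕ) : qmon k 0 0 k ∈ gradPreimageUbar1 k :=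
  qmon_mem_gradPreimageUbar1 (zero_mem _) (zero_mem _) (zero_mem _) (r := C (-(k : ℝ)))
    (monomial_mem_restrictDegree (s := 0) (fun _ => by simp) _) fun p _ => by
      simp only [qmon, pderiv_C, eval_C, map_zero, Pi.zero_apply]
      exact ⟨by ring, by ring, by ring⟩

theorem Ubar0_le_gradPreimageUbar1 {k : ℕ} : Ubar0 k ≤ gradPreimageUbar1 k := by
  refine sup_le (Submodule.span_le.2 ?_) (Submodule.span_le.2 ?_)
  · rintro _ ⟨a, b, c, ha, hb, hc, rfl⟩
    rcases Nat.lt_or_ge (c + 1) k with hck | hck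
    · exact qmon_mem_gradPreimageUbar1_of_add_two_le (by omega) (by omega) hck
    · exact qmon_mem_gradPreimageUbar1_of_add_one_eq (by omega) (by omega) (by omega)
  · rintro _ rfl
    have hq : (fun p : ℝ × ℝ × ℝ => p.2.2 ^ k / (1 + p.2.2) ^ k) = qmon k 0 0 k := by
      ext p; simp [qmon]
    rw [SetLike.mem_coe, hq]
    exact qmon_zero_zero_self_mem_gradPreimageUbar1 k

theorem grad_Ubar0_mem_Ubar1_general (k : ℕ)
    (u : (ℝ × ℝ × ℝ) → ℝ) (hu : u ∈ Ubar0 k) :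
    ∃ v₁ ∈ Qsp ((k : ℤ) - 1) k ((k : ℤ) - 1) (k + 1),
    ∃ v₂ ∈ Qsp k ((k : ℤ) - 1) ((k : ℤ) - 1) (k + 1),
    ∃ v₃ ∈ Qsp k k ((k : ℤ) - 2) (k + 1),
    ∃ r : MvPolynomial (Fin 2) ℝ,
      (∀ d ∈ r.support, d 0 ≤ k ∧ d 1 ≤ k) ∧
      ∀ p ∈ PyrInfInt,
        fderiv ℝ u p ((1 : ℝ), (0 : ℝ), (0 : ℝ)) =
          v₁ p + p.2.2 ^ (k - 1) / (1 + p.2.2) ^ (k + 1) *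
            (p.2.2 * MvPolynomial.eval ![p.1, p.2.1] (MvPolynomial.pderiv 0 r)) ∧
        fderiv ℝ u p ((0 : ℝ), (1 : ℝ), (0 : ℝ)) =
          v₂ p + p.2.2 ^ (k - 1) / (1 + p.2.2) ^ (k + 1) *
            (p.2.2 * MvPolynomial.eval ![p.1, p.2.1] (MvPolynomial.pderiv 1 r)) ∧
        fderiv ℝ u p ((0 : ℝ), (0 : ℝ), (1 : ℝ)) =
          v₃ p - p.2.2 ^ (k - 1) / (1 + p.2.2) ^ (k + 1) *
            MvPolynomial.eval ![p.1, p.2.1] r := by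
  obtain ⟨-, v₁, hv₁, v₂, hv₂, v₃, hv₃, r, hr, hgrad⟩ := Ubar0_le_gradPreimageUbar1 hu
  have hdeg := (mem_restrictDegree _ _ _).1 hr
  exact ⟨v₁, hv₁, v₂, hv₂, v₃, hv₃, r, fun d hd => ⟨hdeg d hd 0, hdeg d hd 1⟩, hgrad⟩

/-- for every `u ∈ U̅^{(0),k}(Ω∞)` the gradient `∇u` on `Ω∞°` belongs to
`U̅^{(1),k}(Ω∞) = (Q^{k−1,k,k−1}_{k+1} × Q^{k,k−1,k−1}_{k+1} × Q^{k,k,k−2}_{k+1})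
+ span{ (z^{k−1}/(1+z)^{k+1})·(z·rₓ, z·r_y, −r) : r ∈ Q^{k,k}[x,y] }`. -/
theorem grad_Ubar0_mem_Ubar1 (k : ℕ) (hk : 1 ≤ k)
    (u : (ℝ × ℝ × ℝ) → ℝ) (hu : u ∈ Ubar0 k) :
    ∃ v₁ ∈ Qsp ((k : ℤ) - 1) k ((k : ℤ) - 1) (k + 1),
    ∃ v₂ ∈ Qsp k ((k : ℤ) - 1) ((k : ℤ) - 1) (k + 1),
    ∃ v₃ ∈ Qsp k k ((k : ℤ) - 2) (k + 1),
    ∃ r : MvPolynomial (Fin 2) ℝ,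
      (∀ d ∈ r.support, d 0 ≤ k ∧ d 1 ≤ k) ∧
      ∀ p ∈ PyrInfInt,
        fderiv ℝ u p ((1 : ℝ), (0 : ℝ), (0 : ℝ)) =
          v₁ p + p.2.2 ^ (k - 1) / (1 + p.2.2) ^ (k + 1) *
            (p.2.2 * MvPolynomial.eval ![p.1, p.2.1] (MvPolynomial.pderiv 0 r)) ∧
        fderiv ℝ u p ((0 : ℝ), (1 : ℝ), (0 : ℝ)) =
          v₂ p + p.2.2 ^ (k - 1) / (1 + p.2.2) ^ (k + 1) *
            (p.2.2 * MvPolynomial.eval ![p.1, p.2.1] (MvPolynomial.pderiv 1 r)) ∧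
        fderiv ℝ u p ((0 : ℝ), (0 : ℝ), (1 : ℝ)) =
          v₃ p - p.2.2 ^ (k - 1) / (1 + p.2.2) ^ (k + 1) *
            MvPolynomial.eval ![p.1, p.2.1] r :=
  grad_Ubar0_mem_Ubar1_general k u hu

end
end

section
/- Fix an integer k ≥ 1. For every polynomial p ∈ ℝ[ξ,η,ζ] of total degree ≤ k−1, the function (x,y,z) ↦ p(x/(1+z), y/(1+z), z/(1+z))·(1+z)^{−4} on Ω∞° belongs to Q^{k−1,k−1,k−1}_{k+3}. (This is the statement that the L²-conforming pyramidal element of order k contains all polynomials of degree ≤ k−1, i.e. P^{k−1}(Ω) ⊂ U^{(3),k}(Ω).) -/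
noncomputable section

/-- Algebraic identity for one monomial. -/
lemma mono_key (k a b c d : ℕ) (hN : a + b + c + 4 + d = k + 3) {x y z : ℝ} (hz : 0 < z) :
    (x / (1 + z)) ^ a * (y / (1 + z)) ^ b * (z / (1 + z)) ^ c / (1 + z) ^ 4 =
      ∑ j ∈ Finset.range (d + 1),
        (d.choose j : ℝ) * (x ^ a * y ^ b * z ^ (c + j) / (1 + z) ^ (k + 3)) := by
  have ht : (0 : ℝ) < 1 + z := by linarith
  have ht' : (1 + z : ℝ) ≠ 0 := ne_of_gt ht
  have hpow : ∑ j ∈ Finset.range (d + 1), (d.choose j : ℝ) * z ^ j = (1 + z) ^ d := by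
    rw [add_comm (1 : ℝ) z, add_pow]
    exact Finset.sum_congr rfl fun j _ => by ring
  have hrhs : ∑ j ∈ Finset.range (d + 1),
      (d.choose j : ℝ) * (x ^ a * y ^ b * z ^ (c + j) / (1 + z) ^ (k + 3)) =
      (∑ j ∈ Finset.range (d + 1), (d.choose j : ℝ) * z ^ j) *
        (x ^ a * y ^ b * z ^ c) / (1 + z) ^ (k + 3) := by
    rw [Finset.sum_mul, Finset.sum_div]
    exact Finset.sum_congr rfl fun j _ => by rw [pow_add]; ring
  rw [hrhs, hpow, ← hN]
  rw [div_pow, div_pow, div_pow]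
  field_simp
  ring

/-- for every polynomial `p ∈ ℝ[ξ,η,ζ]` of total degree `≤ k−1`, the
3-form pullback `(x,y,z) ↦ p(x/(1+z), y/(1+z), z/(1+z))·(1+z)⁻⁴` belongs to
`Q^{k−1,k−1,k−1}_{k+3}` on `Ω∞°`; i.e. `P^{k−1}(Ω) ⊂ U^{(3),k}(Ω)`. -/
theorem pullback_three_form_of_polynomial (k : ℕ) (hk : 1 ≤ k)
    (p : MvPolynomial (Fin 3) ℝ) (hp : p.totalDegree ≤ k - 1) :
    ∃ w ∈ Qsp ((k : ℤ) - 1) ((k : ℤ) - 1) ((k : ℤ) - 1) (k + 3),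
      ∀ q ∈ PyrInfInt,
        MvPolynomial.eval
            ![q.1 / (1 + q.2.2), q.2.1 / (1 + q.2.2), q.2.2 / (1 + q.2.2)] p /
          (1 + q.2.2) ^ 4 = w q := by

  classical
  set d : (Fin 3 →₀ ℕ) → ℕ := fun s => k - 1 - (s 0 + s 1 + s 2) with hd
  have hdeg : ∀ s ∈ p.support, s 0 + s 1 + s 2 ≤ k - 1 := by
    intro s hs
    have h1 := MvPolynomial.le_totalDegree hs
    have h2 : s.sum (fun _ e => e) = s 0 + s 1 + s 2 := by
      rw [Finsupp.sum_fintype _ _ (fun _ => rfl), Fin.sum_univ_three]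
    omega
  refine ⟨∑ s ∈ p.support, p.coeff s • ∑ j ∈ Finset.range (d s + 1),
      ((d s).choose j : ℝ) • qmon (k + 3) (s 0) (s 1) (s 2 + j), ?_, ?_⟩
  · apply Submodule.sum_mem
    intro s hs
    apply Submodule.smul_mem
    apply Submodule.sum_mem
    intro j hj
    apply Submodule.smul_mem
    apply Submodule.subset_span
    have h := hdeg s hs
    simp only [Finset.mem_range] at hj
    refine ⟨s 0, s 1, s 2 + j, ?_, ?_, ?_, rfl⟩ <;> · simp only [hd] at hj ⊢; omega
  · intro q hq
    obtain ⟨hx, -, hy, -, hz⟩ := hq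
    rw [MvPolynomial.eval_eq']
    simp only [Finset.sum_apply, Pi.smul_apply, smul_eq_mul, Finset.sum_div]
    refine Finset.sum_congr rfl fun s hs => ?_
    have hN : s 0 + s 1 + s 2 + 4 + d s = k + 3 := by
      have := hdeg s hs; simp only [hd]; omega
    have hEq : (∏ i, (![q.1 / (1 + q.2.2), q.2.1 / (1 + q.2.2), q.2.2 / (1 + q.2.2)]) i ^ s i)
        / (1 + q.2.2) ^ 4 =
        ∑ j ∈ Finset.range (d s + 1),
          ((d s).choose j : ℝ) * qmon (k + 3) (s 0) (s 1) (s 2 + j) q := by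
      rw [Fin.prod_univ_three]
      simp only [Matrix.cons_val_zero, Matrix.cons_val_one, Matrix.head_cons,
        Matrix.cons_val_two, Matrix.tail_cons]
      simp only [qmon]
      exact mono_key k _ _ _ _ hN hz
    rw [mul_div_assoc, hEq]

end
end
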